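/- arXiv:2205.14116 — 2 statements merged into one kernel-verified Lean document; each statement's English description precedes it below -/
import Mathlib

section
/- (Lemma 2(b)) Let m ≥ 1 be an integer and let α ∈ ℝ with α ≤ 1/2. If p, q ∈ [0,1] satisfy B(m; 2m, p) = α and B(m+1; 2m+2, q) = α, then q ≤ p. That is, for α ≤ 1/2 the robustness threshold for even ensemble sizes is nonincreasing: p*_{2(m+1),α} ≤ p*_{2m,α}. -/
/-- Binomial cumulative distribution function:
`B(k; N, p) = ∑_{i=0}^{k} (N choose i) p^i (1-p)^(N-i)`. -/
noncomputable def binCdf (k N : ℕ) (p : ℝ) : ℝ :=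
  ∑ i ∈ Finset.range (k + 1), (N.choose i : ℝ) * p ^ i * (1 - p) ^ (N - i)

/-- `g_N(p) = B(⌊N/2⌋; N, p)`. -/
noncomputable def gN (N : ℕ) (p : ℝ) : ℝ := binCdf (N / 2) N p

lemma hasDerivAt_binCdf (k N : ℕ) (hk : k < N) (p : ℝ) :
    HasDerivAt (binCdf k N)
      (-(((N - k : ℕ) : ℝ) * (N.choose k : ℝ) * p ^ k * (1 - p) ^ (N - 1 - k))) p := by
  set G : ℕ → ℝ := fun i => (i : ℝ) * (N.choose i : ℝ) * p ^ (i - 1) * (1 - p) ^ (N - i) with hG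
  have key : ∀ i ∈ Finset.range (k + 1),
      HasDerivAt (fun x : ℝ => (N.choose i : ℝ) * x ^ i * (1 - x) ^ (N - i))
        (G i - G (i + 1)) p := by
    intro i hi
    have hiN : i < N := lt_of_le_of_lt (Nat.lt_succ_iff.mp (Finset.mem_range.mp hi)) hk
    have h2 : HasDerivAt (fun x : ℝ => (1 - x) ^ (N - i))
        ((((N - i : ℕ) : ℝ) * (1 - p) ^ (N - i - 1)) * (-1)) p :=
      (hasDerivAt_pow (N - i) (1 - p)).comp p ((hasDerivAt_id p).const_sub 1)
    have h1 : HasDerivAt (fun x : ℝ => (N.choose i : ℝ) * x ^ i)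
        ((N.choose i : ℝ) * ((i : ℝ) * p ^ (i - 1))) p :=
      (hasDerivAt_pow i p).const_mul _
    have h3 := h1.mul h2
    simp only [Pi.mul_def] at h3
    refine h3.congr_deriv (Eq.symm ?_)
    have hnat : (i + 1) * N.choose (i + 1) = (N - i) * N.choose i := by
      rw [mul_comm, Nat.choose_succ_right_eq, mul_comm]
    have hcast : ((i : ℝ) + 1) * (N.choose (i + 1) : ℝ) = ((N - i : ℕ) : ℝ) * (N.choose i : ℝ) := by
      exact_mod_cast congrArg (Nat.cast : ℕ → ℝ) hnat
    simp only [hG]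
    rw [show N - (i + 1) = N - i - 1 from by omega, show (i + 1) - 1 = i from by omega]
    push_cast
    linear_combination (-(p ^ i * (1 - p) ^ (N - i - 1))) * hcast
  have hsum := HasDerivAt.sum key
  rw [Finset.sum_range_sub' G (k + 1)] at hsum
  have hval : G 0 - G (k + 1)
      = -(((N - k : ℕ) : ℝ) * (N.choose k : ℝ) * p ^ k * (1 - p) ^ (N - 1 - k)) := by
    have hnat : (k + 1) * N.choose (k + 1) = (N - k) * N.choose k := by
      rw [mul_comm, Nat.choose_succ_right_eq, mul_comm]
    have hcast : ((k : ℝ) + 1) * (N.choose (k + 1) : ℝ) = ((N - k : ℕ) : ℝ) * (N.choose k : ℝ) := by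
      exact_mod_cast congrArg (Nat.cast : ℕ → ℝ) hnat
    simp only [hG]
    rw [show N - (k + 1) = N - 1 - k from by omega, show (k + 1) - 1 = k from by omega]
    push_cast
    linear_combination (-(p ^ k * (1 - p) ^ (N - 1 - k))) * hcast
  rw [hval] at hsum
  have hf : binCdf k N = ∑ i ∈ Finset.range (k + 1), fun x : ℝ => (N.choose i : ℝ) * x ^ i * (1 - x) ^ (N - i) := by
    ext x; simp [binCdf, Finset.sum_apply]
  rw [hf]
  exact hsum

lemma strictAntiOn_binCdf (k N : ℕ) (hk : k < N) :
    StrictAntiOn (binCdf k N) (Set.Icc 0 1) := by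
  apply strictAntiOn_of_deriv_neg (convex_Icc 0 1)
  · apply Continuous.continuousOn
    unfold binCdf
    fun_prop
  · intro x hx
    rw [interior_Icc] at hx
    rw [(hasDerivAt_binCdf k N hk x).deriv]
    have h1 : (0 : ℝ) < x := hx.1
    have h2 : (0 : ℝ) < 1 - x := by linarith [hx.2]
    have h3 : 0 < ((N - k : ℕ) : ℝ) := by
      have : 0 < N - k := Nat.sub_pos_of_lt hk
      exact_mod_cast this
    have h4 : 0 < (N.choose k : ℝ) := by
      exact_mod_cast Nat.choose_pos hk.le
    have : 0 < ((N - k : ℕ) : ℝ) * (N.choose k : ℝ) * x ^ k * (1 - x) ^ (N - 1 - k) := by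
      positivity
    linarith

lemma binCdf_succ_N (k N : ℕ) (hk : k ≤ N) (p : ℝ) :
    binCdf k (N + 1) p
      = binCdf k N p - (N.choose k : ℝ) * p ^ (k + 1) * (1 - p) ^ (N - k) := by
  induction k with
  | zero =>
    simp [binCdf, pow_succ]
    ring
  | succ k ih =>
    have hkN : k ≤ N := Nat.le_of_succ_le hk
    have h1 : binCdf (k + 1) (N + 1) p = binCdf k (N + 1) p
        + ((N + 1).choose (k + 1) : ℝ) * p ^ (k + 1) * (1 - p) ^ (N + 1 - (k + 1)) := by
      unfold binCdf
      rw [Finset.sum_range_succ]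
    have h2 : binCdf (k + 1) N p = binCdf k N p
        + (N.choose (k + 1) : ℝ) * p ^ (k + 1) * (1 - p) ^ (N - (k + 1)) := by
      unfold binCdf
      rw [Finset.sum_range_succ]
    have hc : (((N + 1).choose (k + 1) : ℕ) : ℝ)
        = (N.choose k : ℝ) + (N.choose (k + 1) : ℝ) := by
      exact_mod_cast Nat.choose_succ_succ N k
    have he : N + 1 - (k + 1) = N - k := by omega
    have he2 : N - k = (N - (k + 1)) + 1 := by omega
    rw [h1, h2, ih hkN, hc, he, he2, pow_succ]
    ring

lemma two_mul_sum_choose (m : ℕ) :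
    2 * ∑ i ∈ Finset.range (m + 1), (2 * m).choose i = 2 ^ (2 * m) + (2 * m).choose m := by
  have htot : ∑ i ∈ Finset.range (2 * m + 1), (2 * m).choose i = 2 ^ (2 * m) :=
    Nat.sum_range_choose (2 * m)
  have hsplit : ∑ i ∈ Finset.range (2 * m + 1), (2 * m).choose i
      = (∑ i ∈ Finset.range (m + 1), (2 * m).choose i)
        + ∑ j ∈ Finset.range m, (2 * m).choose (m + 1 + j) := by
    rw [show 2 * m + 1 = (m + 1) + m by omega, Finset.sum_range_add]
  have hrefl : ∑ j ∈ Finset.range m, (2 * m).choose (m + 1 + j)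
      = ∑ j ∈ Finset.range m, (2 * m).choose j := by
    rw [← Finset.sum_range_reflect (fun j => (2 * m).choose j) m]
    apply Finset.sum_congr rfl
    intro j hj
    have hj' : j < m := Finset.mem_range.mp hj
    rw [show m - 1 - j = 2 * m - (m + 1 + j) by omega,
      Nat.choose_symm (show m + 1 + j ≤ 2 * m by omega)]
  have hS : ∑ i ∈ Finset.range (m + 1), (2 * m).choose i
      = (∑ i ∈ Finset.range m, (2 * m).choose i) + (2 * m).choose m :=
    Finset.sum_range_succ _ m
  rw [hrefl] at hsplit
  set a := ∑ i ∈ Finset.range m, (2 * m).choose i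
  set S := ∑ i ∈ Finset.range (m + 1), (2 * m).choose i
  set b := 2 ^ (2 * m)
  omega

lemma half_lt_binCdf_half (m : ℕ) : (1 : ℝ) / 2 < binCdf m (2 * m) (1 / 2) := by
  have h : binCdf m (2 * m) (1 / 2 : ℝ)
      = (∑ i ∈ Finset.range (m + 1), ((2 * m).choose i : ℝ)) / 2 ^ (2 * m) := by
    unfold binCdf
    rw [Finset.sum_div]
    apply Finset.sum_congr rfl
    intro i hi
    have hi' : i ≤ m := Nat.lt_succ_iff.mp (Finset.mem_range.mp hi)
    rw [show (1 - (1 / 2 : ℝ)) = 1 / 2 by norm_num, mul_assoc, ← pow_add,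
      show i + (2 * m - i) = 2 * m by omega, div_pow, one_pow, mul_one_div]
  have hnat : 2 ^ (2 * m) < 2 * ∑ i ∈ Finset.range (m + 1), (2 * m).choose i := by
    rw [two_mul_sum_choose]
    have := Nat.choose_pos (show m ≤ 2 * m by omega)
    omega
  have hcast : (2 : ℝ) ^ (2 * m) < 2 * ∑ i ∈ Finset.range (m + 1), ((2 * m).choose i : ℝ) := by
    exact_mod_cast hnat
  rw [h, lt_div_iff₀ (by positivity)]
  linarith

theorem threshold_antitone_even (m : ℕ) (hm : 1 ≤ m) (α : ℝ) (hα : α ≤ 1 / 2)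
    (p q : ℝ) (hp : p ∈ Set.Icc (0 : ℝ) 1) (hq : q ∈ Set.Icc (0 : ℝ) 1)
    (hP : binCdf m (2 * m) p = α)
    (hQ : binCdf (m + 1) (2 * m + 2) q = α) :
    q ≤ p := by
  have hp0 : (0 : ℝ) ≤ p := hp.1
  have hp1 : p ≤ 1 := hp.2
  have hhalfmem : (1 / 2 : ℝ) ∈ Set.Icc (0 : ℝ) 1 := by norm_num
  have hanti1 : StrictAntiOn (binCdf m (2 * m)) (Set.Icc 0 1) :=
    strictAntiOn_binCdf m (2 * m) (by omega)
  have hanti2 : StrictAntiOn (binCdf (m + 1) (2 * m + 2)) (Set.Icc 0 1) :=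
    strictAntiOn_binCdf (m + 1) (2 * m + 2) (by omega)
  have hp_half : (1 / 2 : ℝ) ≤ p := by
    by_contra h
    push_neg at h
    have h2 := hanti1 hp hhalfmem h
    have h3 := half_lt_binCdf_half m
    rw [hP] at h2
    linarith
  -- recurrence computations
  have hrec1 : binCdf (m + 1) (2 * m + 2) p
      = binCdf (m + 1) (2 * m + 1) p
        - ((2 * m + 1).choose (m + 1) : ℝ) * p ^ (m + 2) * (1 - p) ^ m := by
    have h := binCdf_succ_N (m + 1) (2 * m + 1) (by omega) p
    rw [show 2 * m + 1 + 1 = 2 * m + 2 by omega, show m + 1 + 1 = m + 2 by omega,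
      show 2 * m + 1 - (m + 1) = m by omega] at h
    exact h
  have hrec2 : binCdf (m + 1) (2 * m + 1) p
      = binCdf (m + 1) (2 * m) p
        - ((2 * m).choose (m + 1) : ℝ) * p ^ (m + 2) * (1 - p) ^ (m - 1) := by
    have h := binCdf_succ_N (m + 1) (2 * m) (by omega) p
    rw [show m + 1 + 1 = m + 2 by omega, show 2 * m - (m + 1) = m - 1 by omega] at h
    exact h
  have hrec3 : binCdf (m + 1) (2 * m) p
      = binCdf m (2 * m) p
        + ((2 * m).choose (m + 1) : ℝ) * p ^ (m + 1) * (1 - p) ^ (m - 1) := by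
    unfold binCdf
    rw [Finset.sum_range_succ, show 2 * m - (m + 1) = m - 1 by omega]
  have hchoose : 2 * (2 * m).choose (m + 1) ≤ (2 * m + 1).choose (m + 1) := by
    have h1 : (2 * m + 1).choose (m + 1) = (2 * m).choose m + (2 * m).choose (m + 1) :=
      Nat.choose_succ_succ (2 * m) m
    have h2 : (2 * m).choose (m + 1) ≤ (2 * m).choose m := by
      have h3 := Nat.choose_le_middle (m + 1) (2 * m)
      rwa [show (2 * m) / 2 = m by omega] at h3
    omega
  have hkey : binCdf (m + 1) (2 * m + 2) p ≤ α := by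
    rw [hrec1, hrec2, hrec3, hP]
    have hq0 : (0 : ℝ) ≤ 1 - p := by linarith
    have hpowm : (1 - p) ^ (m - 1) * (1 - p) = (1 - p) ^ m := by
      rw [← pow_succ, show m - 1 + 1 = m by omega]
    have hpowp : p ^ (m + 2) = p ^ (m + 1) * p := by
      rw [← pow_succ]
    have hfac : (0 : ℝ) ≤ p ^ (m + 1) * (1 - p) ^ (m - 1) :=
      mul_nonneg (pow_nonneg hp0 _) (pow_nonneg hq0 _)
    have hc : ((2 * m).choose (m + 1) : ℝ) ≤ ((2 * m + 1).choose (m + 1) : ℝ) * p := by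
      have hcc : (2 * ((2 * m).choose (m + 1)) : ℝ) ≤ ((2 * m + 1).choose (m + 1) : ℝ) := by
        exact_mod_cast hchoose
      nlinarith [Nat.cast_nonneg (α := ℝ) ((2 * m + 1).choose (m + 1))]
    rw [hpowp, ← hpowm]
    nlinarith [mul_le_mul_of_nonneg_right (mul_le_mul_of_nonneg_right hc hfac) hq0]
  by_contra hle
  push_neg at hle
  have hlt := hanti2 hp hq hle
  rw [hQ] at hlt
  linarith
end

section
/- For every integer m ≥ 1 and every real p with m/(2m+1) ≤ p ≤ 1, the binomial c.d.f. at the median threshold is nonincreasing from even size 2m to even size 2m+2: B(m+1; 2m+2, p) ≤ B(m; 2m, p). In particular this holds for all p ≥ 1/2, since m/(2m+1) < 1/2. -/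
noncomputable def binTerm (i N : ℕ) (p : ℝ) : ℝ :=
  (N.choose i : ℝ) * p ^ i * (1 - p) ^ (N - i)

lemma binCdf_zero (N : ℕ) (p : ℝ) : binCdf 0 N p = (1 - p) ^ N := by
  simp [binCdf]

lemma binCdf_succ (k N : ℕ) (p : ℝ) : binCdf (k + 1) N p = binCdf k N p + binTerm (k + 1) N p :=
  Finset.sum_range_succ _ _

-- For `i > n` both sides vanish, so truncated subtraction in the exponent does no harm.
lemma one_sub_mul_binTerm (i n : ℕ) (p : ℝ) :
    (1 - p) * binTerm i n p = (n.choose i : ℝ) * p ^ i * (1 - p) ^ (n + 1 - i) := by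
  rcases le_or_gt i n with h | h
  · rw [binTerm, Nat.sub_add_comm h]; ring
  · simp [binTerm, Nat.choose_eq_zero_of_lt h]

lemma binTerm_succ_succ (k n : ℕ) (p : ℝ) :
    binTerm (k + 1) (n + 1) p = (1 - p) * binTerm (k + 1) n p + p * binTerm k n p := by
  rw [one_sub_mul_binTerm, binTerm, binTerm, Nat.choose_succ_succ, Nat.add_sub_add_right]
  push_cast
  ring

lemma binCdf_succ_right (k n : ℕ) (p : ℝ) :
    binCdf k (n + 1) p = binCdf k n p - p * binTerm k n p := by
  induction k with
  | zero => simp only [binCdf_zero, binTerm, Nat.choose_zero_right, Nat.sub_zero]; ring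
  | succ k ih => rw [binCdf_succ, binCdf_succ, ih, binTerm_succ_succ]; ring

lemma binCdf_succ_add_two (k n : ℕ) (p : ℝ) :
    binCdf (k + 1) (n + 2) p = binCdf k n p
      + p ^ (k + 1) * (1 - p) ^ (n - k)
        * ((n.choose (k + 1) : ℝ) - p * ((n + 1).choose (k + 1) : ℝ)) := by
  have hpascal : (1 - p) * binTerm (k + 1) n p
      = (n.choose (k + 1) : ℝ) * p ^ (k + 1) * (1 - p) ^ (n - k) := by
    rw [one_sub_mul_binTerm, Nat.add_sub_add_right]
  have hlast : binTerm (k + 1) (n + 1) p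
      = ((n + 1).choose (k + 1) : ℝ) * p ^ (k + 1) * (1 - p) ^ (n - k) := by
    rw [binTerm, Nat.add_sub_add_right]
  rw [binCdf_succ_right, binCdf_succ_right, binCdf_succ]
  linear_combination hpascal - p * hlast

lemma choose_sub_mul_choose_nonpos (m : ℕ) {p : ℝ} (hp : (m : ℝ) / (2 * m + 1) ≤ p) :
    ((2 * m).choose (m + 1) : ℝ) - p * ((2 * m + 1).choose (m + 1) : ℝ) ≤ 0 := by
  have hchoose : ((2 * m).choose (m + 1) : ℝ) * (2 * m + 1)
      = ((2 * m + 1).choose (m + 1) : ℝ) * m := by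
    have h := Nat.choose_mul_succ_eq (2 * m) (m + 1)
    rw [show 2 * m + 1 - (m + 1) = m by omega] at h
    exact_mod_cast h
  have hm : (m : ℝ) ≤ p * (2 * m + 1) := (div_le_iff₀ (by positivity)).mp hp
  have hscaled : (((2 * m).choose (m + 1) : ℝ) - p * ((2 * m + 1).choose (m + 1) : ℝ))
      * (2 * m + 1) ≤ 0 := by
    nlinarith [Nat.cast_nonneg (α := ℝ) ((2 * m + 1).choose (m + 1))]
  exact nonpos_of_mul_nonpos_left hscaled (by positivity)

theorem binCdf_even_antitone_general (m : ℕ) (p : ℝ)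
    (hp0 : (m : ℝ) / (2 * m + 1) ≤ p) (hp1 : p ≤ 1) :
    binCdf (m + 1) (2 * m + 2) p ≤ binCdf m (2 * m) p := by
  have hp : 0 ≤ p := le_trans (by positivity) hp0
  have hq : 0 ≤ 1 - p := sub_nonneg.mpr hp1
  rw [binCdf_succ_add_two]
  exact add_le_of_nonpos_right <|
    mul_nonpos_of_nonneg_of_nonpos (by positivity) (choose_sub_mul_choose_nonpos m hp0)

theorem binCdf_even_antitone (m : ℕ) (hm : 1 ≤ m) (p : ℝ)
    (hp0 : (m : ℝ) / (2 * m + 1) ≤ p) (hp1 : p ≤ 1) :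
    binCdf (m + 1) (2 * m + 2) p ≤ binCdf m (2 * m) p :=
  binCdf_even_antitone_general m p hp0 hp1
end
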